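/- arXiv:2503.14619 — 2 statements merged into one kernel-verified Lean document; each statement's English description precedes it below -/
import Mathlib

section
/- Let λ_1, ..., λ_K ∈ [0, 1-c] for some constant c ∈ (0,1), and let a_ℓ denote the coefficient of z^ℓ in the power series of f(z) = (1/(1-z)) · ∏_{k=1}^{K} 1/(1 - z λ_k²). Then for any r with 1 < r < 1/(1-c)², one has |a_ℓ − ∏_{k=1}^{K} 1/(1 - λ_k²)| ≤ (1/(r^ℓ (r-1))) · ∏_{k=1}^{K} 1/(1 - r λ_k²) for every ℓ ≥ 0. -/
/-!
Write `f = (1 - z)⁻¹ G` with `G = ∏ₖ (1 - λₖ² z)⁻¹`. The coefficients `bⱼ` of `G` are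
nonnegative, `a_ℓ = ∑_{j ≤ ℓ} bⱼ`, and `∑ⱼ bⱼ ρʲ = G(ρ)` for `ρ = 1` and `ρ = r`
(Cauchy products of nonnegative series). Hence `G(1) - a_ℓ = ∑_{j > ℓ} bⱼ` is at most
`r^{-(ℓ+1)} ∑ⱼ bⱼ rʲ = G(r) / r^{ℓ+1} ≤ G(r) / (r^ℓ (r - 1))`.
-/

open Finset PowerSeries

theorem hasSum_sum_antidiagonal_mul_of_nonneg {A : Type*} [AddCommMonoid A] [HasAntidiagonal A]
    {f g : A → ℝ} {s t : ℝ} (hf : HasSum f s) (hg : HasSum g t) (hf₀ : 0 ≤ f) (hg₀ : 0 ≤ g) :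
    HasSum (fun n ↦ ∑ kl ∈ antidiagonal n, f kl.1 * g kl.2) (s * t) := by
  have hfg := hf.summable.mul_of_nonneg hg.summable hf₀ hg₀
  rw [hf.tsum_eq.symm, hg.tsum_eq.symm,
    hf.summable.tsum_mul_tsum_eq_tsum_sum_antidiagonal hg.summable hfg]
  exact (summable_sum_mul_antidiagonal_of_summable_mul hfg).hasSum

namespace PowerSeries

theorem coeff_mul_nonneg {φ ψ : ℝ⟦X⟧} (hφ : ∀ n, 0 ≤ coeff n φ) (hψ : ∀ n, 0 ≤ coeff n ψ)
    (n : ℕ) : 0 ≤ coeff n (φ * ψ) := by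
  rw [coeff_mul]
  exact sum_nonneg fun kl _ ↦ mul_nonneg (hφ _) (hψ _)

theorem coeff_prod_nonneg {ι : Type*} (S : Finset ι) {φ : ι → ℝ⟦X⟧}
    (hφ : ∀ i ∈ S, ∀ n, 0 ≤ coeff n (φ i)) (n : ℕ) : 0 ≤ coeff n (∏ i ∈ S, φ i) :=
  prod_induction φ (fun ψ ↦ ∀ n, 0 ≤ coeff n ψ) (fun _ _ ↦ coeff_mul_nonneg)
    (fun n ↦ by rw [coeff_one]; split_ifs <;> norm_num) hφ n

theorem hasSum_coeff_mul {φ ψ : ℝ⟦X⟧} {s t : ℝ} (hφ : ∀ n, 0 ≤ coeff n φ)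
    (hψ : ∀ n, 0 ≤ coeff n ψ) (hs : HasSum (coeff · φ) s) (ht : HasSum (coeff · ψ) t) :
    HasSum (coeff · (φ * ψ)) (s * t) := by
  simpa only [coeff_mul] using hasSum_sum_antidiagonal_mul_of_nonneg hs ht hφ hψ

theorem hasSum_coeff_prod {ι : Type*} (S : Finset ι) {φ : ι → ℝ⟦X⟧} {s : ι → ℝ}
    (hφ : ∀ i ∈ S, ∀ n, 0 ≤ coeff n (φ i)) (hs : ∀ i ∈ S, HasSum (coeff · (φ i)) (s i)) :
    HasSum (coeff · (∏ i ∈ S, φ i)) (∏ i ∈ S, s i) := by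
  classical
  induction S using Finset.induction_on with
  | empty => simpa [coeff_one] using hasSum_ite_eq 0 (1 : ℝ)
  | insert i S hi ih =>
    rw [forall_mem_insert] at hφ hs
    rw [prod_insert hi, prod_insert hi]
    exact hasSum_coeff_mul hφ.1 (coeff_prod_nonneg S hφ.2) hs.1 (ih hφ.2 hs.2)

theorem coeff_mk_pow_nonneg {y : ℝ} (hy : 0 ≤ y) (n : ℕ) : 0 ≤ coeff n (mk fun n ↦ y ^ n) := by
  simpa only [coeff_mk] using pow_nonneg hy n

theorem hasSum_coeff_mk_pow {y : ℝ} (hy₀ : 0 ≤ y) (hy₁ : y < 1) :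
    HasSum (coeff · (mk fun n ↦ y ^ n)) (1 / (1 - y)) := by
  simpa only [coeff_mk, one_div] using hasSum_geometric_of_lt_one hy₀ hy₁

theorem coeff_mk_one_mul {R : Type*} [Semiring R] (φ : R⟦X⟧) (n : ℕ) :
    coeff n (mk 1 * φ) = ∑ i ∈ range (n + 1), coeff i φ := by
  rw [coeff_mul, ← Nat.sum_antidiagonal_swap]
  simp only [Prod.fst_swap, Prod.snd_swap, coeff_mk, Pi.one_apply, one_mul]
  exact Nat.sum_antidiagonal_eq_sum_range_succ (fun i _ ↦ coeff i φ) n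

end PowerSeries

theorem sub_sum_range_le_div_pow_of_hasSum {b : ℕ → ℝ} {s t r : ℝ} (hb : 0 ≤ b) (hr : 1 ≤ r)
    (hs : HasSum b s) (ht : HasSum (fun n ↦ r ^ n * b n) t) (m : ℕ) :
    s - ∑ i ∈ range m, b i ≤ t / r ^ m := by
  have hr₀ : 0 < r ^ m := pow_pos (by linarith) m
  rw [le_div_iff₀ hr₀]
  have htail := (hasSum_nat_add_iff' m).2 hs
  have htail' := (hasSum_nat_add_iff' m).2 ht
  calc (s - ∑ i ∈ range m, b i) * r ^ m
      = ∑' n, b (n + m) * r ^ m := by rw [htail.summable.tsum_mul_right, htail.tsum_eq]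
    _ ≤ ∑' n, r ^ (n + m) * b (n + m) := by
        refine htail.summable.mul_right _ |>.tsum_le_tsum (fun n ↦ ?_) htail'.summable
        rw [mul_comm]
        gcongr
        · exact hb _
        · omega
    _ = t - ∑ i ∈ range m, r ^ i * b i := htail'.tsum_eq
    _ ≤ t := sub_le_self _ (sum_nonneg fun i _ ↦ mul_nonneg (pow_nonneg (by linarith) i) (hb i))

theorem coeff_residue_bound_general (K : ℕ) (c : ℝ)
    (lam : Fin K → ℝ) (hlam : ∀ k, 0 ≤ lam k ∧ lam k ≤ 1 - c)
    (r : ℝ) (hr1 : 1 < r) (hr2 : r < 1 / (1 - c) ^ 2) (ℓ : ℕ) :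
    |PowerSeries.coeff (R := ℝ) ℓ
        ((PowerSeries.mk fun _ => (1 : ℝ)) *
          ∏ k : Fin K, PowerSeries.mk fun n => (lam k ^ 2) ^ n)
      - ∏ k : Fin K, 1 / (1 - lam k ^ 2)|
      ≤ (1 / (r ^ ℓ * (r - 1))) * ∏ k : Fin K, 1 / (1 - r * lam k ^ 2) := by
  have hc : 0 < (1 - c) ^ 2 := by
    refine (sq_nonneg _).lt_of_ne fun h ↦ ?_
    rw [← h, div_zero] at hr2
    linarith
  have hrx : ∀ k, r * lam k ^ 2 < 1 := fun k ↦ calc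
    r * lam k ^ 2 ≤ r * (1 - c) ^ 2 := by gcongr <;> linarith [hlam k]
    _ < 1 := (lt_div_iff₀ hc).1 hr2
  have hrx₀ : ∀ k, 0 ≤ r * lam k ^ 2 := fun k ↦ by have := sq_nonneg (lam k); positivity
  have hx : ∀ k, lam k ^ 2 < 1 := fun k ↦ by nlinarith [hrx k, sq_nonneg (lam k)]
  set G := ∏ k : Fin K, mk fun n ↦ (lam k ^ 2) ^ n
  have hG₀ : ∀ n, 0 ≤ coeff n G :=
    coeff_prod_nonneg _ fun k _ ↦ coeff_mk_pow_nonneg (sq_nonneg _)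
  have hG₁ : HasSum (coeff · G) (∏ k, 1 / (1 - lam k ^ 2)) :=
    hasSum_coeff_prod _ (fun k _ ↦ coeff_mk_pow_nonneg (sq_nonneg _))
      fun k _ ↦ hasSum_coeff_mk_pow (sq_nonneg _) (hx k)
  have hGr : HasSum (fun n ↦ r ^ n * coeff n G) (∏ k, 1 / (1 - r * lam k ^ 2)) := by
    simp only [← coeff_rescale, G, map_prod, rescale_mk, ← mul_pow]
    exact hasSum_coeff_prod _ (fun k _ ↦ coeff_mk_pow_nonneg (hrx₀ k))
      fun k _ ↦ hasSum_coeff_mk_pow (hrx₀ k) (hrx k)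
  have ha : coeff ℓ (PowerSeries.mk 1 * G) = ∑ i ∈ range (ℓ + 1), coeff i G :=
    coeff_mk_one_mul G ℓ
  rw [abs_sub_comm, abs_of_nonneg (sub_nonneg.2 (ha ▸ sum_le_hasSum _ (fun i _ ↦ hG₀ i) hG₁))]
  calc _ ≤ (∏ k, 1 / (1 - r * lam k ^ 2)) / r ^ (ℓ + 1) :=
        ha ▸ sub_sum_range_le_div_pow_of_hasSum hG₀ hr1.le hG₁ hGr (ℓ + 1)
    _ ≤ _ := by
      rw [div_eq_inv_mul, ← one_div, pow_succ]
      gcongr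
      · exact hGr.nonneg fun n ↦ mul_nonneg (by positivity) (hG₀ n)
      · linarith

/-- Let `λ_1,…,λ_K ∈ [0, 1-c]` with `c ∈ (0,1)`, and let `a_ℓ` be the coefficient of
`z^ℓ` in the power series of `f(z) = (1/(1-z)) ∏_k 1/(1 - z λ_k²)`. Then for any
`1 < r < 1/(1-c)²` and every `ℓ`,
`|a_ℓ - ∏_k 1/(1-λ_k²)| ≤ (1/(r^ℓ (r-1))) ∏_k 1/(1 - r λ_k²)`. -/
theorem coeff_residue_bound (K : ℕ) (c : ℝ) (hc : 0 < c ∧ c < 1)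
    (lam : Fin K → ℝ) (hlam : ∀ k, 0 ≤ lam k ∧ lam k ≤ 1 - c)
    (r : ℝ) (hr1 : 1 < r) (hr2 : r < 1 / (1 - c) ^ 2) (ℓ : ℕ) :
    |PowerSeries.coeff (R := ℝ) ℓ
        ((PowerSeries.mk fun _ => (1 : ℝ)) *
          ∏ k : Fin K, PowerSeries.mk fun n => (lam k ^ 2) ^ n)
      - ∏ k : Fin K, 1 / (1 - lam k ^ 2)|
      ≤ (1 / (r ^ ℓ * (r - 1))) * ∏ k : Fin K, 1 / (1 - r * lam k ^ 2) :=
  coeff_residue_bound_general K c lam hlam r hr1 hr2 ℓ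
end

section
/- Fix m ≤ n. For an injection π : [m] → [n], consider the bipartite multigraph G_π on left vertices [m] and right vertices [n] with edge set {(i,i) : i ∈ [m]} ∪ {(i, π(i)) : i ∈ [m]}. Let I ⊆ [m] be the largest subset with π(I) = I (the vertex set of the 2-core on each side), and let σ = π restricted to I. Then for any fixed subset I of size ℓ < m and any permutation σ of I, the number of injections π : [m] → [n] with 2-core support exactly I and π|_I = σ equals (n − ℓ − 1)(n − ℓ − 2)⋯(n − m); when ℓ = m this count is 1. -/
open scoped BigOperators

/-- A subset `J ⊆ [m]` is invariant under the injection `π : [m] ↪ [n]` if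
`π(J) = J` (viewing `J` as a subset of `[n]` via the canonical inclusion). -/
def InvariantUnder {m n : ℕ} (hmn : m ≤ n) (π : Fin m ↪ Fin n) (J : Finset (Fin m)) :
    Prop :=
  J.image (fun i => π i) = J.image (Fin.castLE hmn)

/-!
Off its 2-core support `I`, an injection `π` is a disjoint union of paths from `[m] ∖ I` into
`[n] ∖ I`, each ending outside `[m]`. Deleting a vertex `a` from its path and joining its
predecessor to its successor is a bijection between such path forests on `S ∪ {a}` with targets
`T` and pairs (path forest on `S` with targets `T ∖ {a}`, successor of `a` in `T ∖ {a}`). Each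
vertex of `[m] ∖ I` therefore contributes a factor `|T| - 1`, where `|T|` drops by one each time.
-/

open Finset Function

namespace Finset

variable {A B : Type*} [DecidableEq B]

lemma image_eq_image_iff_forall_mem {f g : A ↪ B} {J : Finset A} :
    J.image f = J.image g ↔ ∀ x ∈ J, f x ∈ J.image g := by
  refine ⟨fun h x hx => h ▸ mem_image_of_mem f hx, fun h => eq_of_subset_of_card_le ?_ ?_⟩
  · exact image_subset_iff.2 h
  · rw [card_image_of_injective _ f.injective, card_image_of_injective _ g.injective]

lemma mem_image_erase_of_ne [DecidableEq A] {ι : A ↪ B} {J : Finset A} {a : A} {b : B}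
    (hb : b ∈ J.image ι) (hba : b ≠ ι a) : b ∈ (J.erase a).image ι := by
  rw [image_erase ι.injective]
  exact mem_erase.2 ⟨hba, hb⟩

end Finset

section PathForest

variable {A B : Type*} [DecidableEq B]

/-- Reading `f x`, for `x ∈ S`, as an edge from `x` to `ι⁻¹ (f x)`, these edges form disjoint
paths. Off `S`, `f` is pinned to `φ`, so that only the edges are counted. -/
structure IsPathForest (ι : A ↪ B) (φ : A → B) (S : Finset A) (T : Finset B) (f : A → B) :
    Prop where
  eq_of_notMem : ∀ x ∉ S, f x = φ x
  injOn : Set.InjOn f S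
  mem : ∀ x ∈ S, f x ∈ T
  acyclic : ∀ J ⊆ S, (∀ x ∈ J, f x ∈ J.image ι) → J = ∅

variable {ι : A ↪ B} {φ : A → B} {S : Finset A} {T : Finset B} {a : A}

lemma IsPathForest.apply_mem_erase {f : A → B} (hf : IsPathForest ι φ S T f) (ha : a ∈ S) :
    f a ∈ T.erase (ι a) := by
  refine mem_erase.2 ⟨fun hfa => ?_, hf.mem a ha⟩
  have := hf.acyclic {a} (singleton_subset_iff.2 ha) (by simp [hfa])
  simp at this

lemma isPathForest_empty_iff {f : A → B} : IsPathForest ι φ ∅ T f ↔ f = φ := by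
  refine ⟨fun hf => funext fun x => hf.eq_of_notMem x (notMem_empty x), ?_⟩
  rintro rfl
  exact ⟨fun _ _ => rfl, by simp, by simp, fun J hJ _ => subset_empty.1 hJ⟩

variable [DecidableEq A]

namespace PathForest

/-- Remove `a` from its path, joining its predecessor directly to its successor. -/
def bypass (ι : A ↪ B) (φ : A → B) (S : Finset A) (a : A) (f : A → B) : A → B := fun x =>
  if x = a then φ a else if x ∈ S ∧ f x = ι a then f a else f x

/-- Insert `a` into a path, just before `y`. -/
def splice (ι : A ↪ B) (S : Finset A) (a : A) (g : A → B) (y : B) : A → B := fun x =>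
  if x = a then y else if x ∈ S ∧ g x = y then ι a else g x

variable {f g : A → B} {x : A} {y : B}

@[simp] lemma bypass_self : bypass ι φ S a f a = φ a := if_pos rfl

lemma bypass_of_mem (ha : a ∉ S) (hx : x ∈ S) :
    bypass ι φ S a f x = if f x = ι a then f a else f x := by
  simp [bypass, hx, ne_of_mem_of_not_mem hx ha]

lemma bypass_of_notMem (hx : x ∉ S) (hxa : x ≠ a) : bypass ι φ S a f x = f x := by
  simp [bypass, hx, hxa]

@[simp] lemma splice_self : splice ι S a g y a = y := if_pos rfl

lemma splice_of_mem (ha : a ∉ S) (hx : x ∈ S) :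
    splice ι S a g y x = if g x = y then ι a else g x := by
  simp [splice, hx, ne_of_mem_of_not_mem hx ha]

lemma splice_of_notMem (hx : x ∉ S) (hxa : x ≠ a) : splice ι S a g y x = g x := by
  simp [splice, hx, hxa]

end PathForest

open PathForest

namespace IsPathForest

lemma acyclic_bypass {f : A → B} (hf : IsPathForest ι φ (insert a S) T f) (ha : a ∉ S)
    {J : Finset A} (hJ : J ⊆ S) (hJι : ∀ x ∈ J, bypass ι φ S a f x ∈ J.image ι) : J = ∅ := by
  by_cases hpred : ∃ x₀ ∈ J, f x₀ = ι a
  · obtain ⟨x₀, hx₀, hfx₀⟩ := hpred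
    -- the bypassed edge `x₀ → f a` of the cycle `J` reopens into `x₀ → a → f a`
    have hK := hf.acyclic (insert a J) (insert_subset_insert a hJ) fun x hx => by
      rw [image_insert]
      rcases mem_insert.1 hx with rfl | hx
      · have := hJι x₀ hx₀
        rw [bypass_of_mem ha (hJ hx₀), if_pos hfx₀] at this
        exact mem_insert_of_mem this
      · by_cases hfx : f x = ι a
        · exact hfx ▸ mem_insert_self _ _
        · have := hJι x hx
          rw [bypass_of_mem ha (hJ hx), if_neg hfx] at this
          exact mem_insert_of_mem this
    exact absurd hK (insert_ne_empty a J)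
  · push Not at hpred
    exact hf.acyclic J (hJ.trans (subset_insert a S)) fun x hx => by
      simpa [bypass_of_mem ha (hJ hx), hpred x hx] using hJι x hx

lemma bypass {f : A → B} (hf : IsPathForest ι φ (insert a S) T f) (ha : a ∉ S) :
    IsPathForest ι φ S (T.erase (ι a)) (bypass ι φ S a f) := by
  have hinj : ∀ {x y}, x ∈ insert a S → y ∈ insert a S → f x = f y → x = y :=
    fun hx hy => hf.injOn hx hy
  refine ⟨fun x hx => ?_, fun x hx y hy hxy => ?_, fun x hx => ?_,
    fun J hJ => hf.acyclic_bypass ha hJ⟩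
  · by_cases hxa : x = a
    · simp [hxa]
    · rw [bypass_of_notMem hx hxa, hf.eq_of_notMem x (by simp [hxa, hx])]
  · have hx' : x ∈ insert a S := mem_insert_of_mem hx
    have hy' : y ∈ insert a S := mem_insert_of_mem hy
    rw [bypass_of_mem ha hx, bypass_of_mem ha hy] at hxy
    split_ifs at hxy with h1 h2 h2
    · exact hinj hx' hy' (h1.trans h2.symm)
    · exact absurd (hinj hy' (mem_insert_self a S) hxy.symm) (ne_of_mem_of_not_mem hy ha)
    · exact absurd (hinj hx' (mem_insert_self a S) hxy) (ne_of_mem_of_not_mem hx ha)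
    · exact hinj hx' hy' hxy
  · rw [bypass_of_mem ha hx]
    split_ifs with h
    · exact hf.apply_mem_erase (mem_insert_self a S)
    · exact mem_erase.2 ⟨h, hf.mem x (mem_insert_of_mem hx)⟩

lemma acyclic_splice {g : A → B} {y : B} (hg : IsPathForest ι φ S (T.erase (ι a)) g)
    (ha : a ∉ S) (hy : y ∈ T.erase (ι a)) {J : Finset A} (hJ : J ⊆ insert a S)
    (hJι : ∀ x ∈ J, splice ι S a g y x ∈ J.image ι) : J = ∅ := by
  have hya : y ≠ ι a := ne_of_mem_erase hy
  have hJS : J.erase a ⊆ S := (erase_subset_erase a hJ).trans (erase_insert_subset a S)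
  -- an edge of `J` into `ι a` forces `a ∈ J`; replacing `x → a → y` by `x → y` leaves a cycle
  have hJ' : J.erase a = ∅ := hg.acyclic _ hJS fun x hx => by
    have hfx := hJι x (mem_of_mem_erase hx)
    rw [splice_of_mem ha (hJS hx)] at hfx
    split_ifs at hfx with h
    · have := hJι a (ι.injective.mem_finset_image.1 hfx)
      rw [splice_self] at this
      exact h ▸ mem_image_erase_of_ne this hya
    · exact mem_image_erase_of_ne hfx (ne_of_mem_erase (hg.mem x (hJS hx)))
  rcases (erase_eq_empty_iff J a).1 hJ' with hJ0 | rfl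
  · exact hJ0
  · have := hJι a (mem_singleton_self a)
    simp [hya] at this

lemma splice {g : A → B} {y : B} (hg : IsPathForest ι φ S (T.erase (ι a)) g) (ha : a ∉ S)
    (haT : ι a ∈ T) (hy : y ∈ T.erase (ι a)) :
    IsPathForest ι φ (insert a S) T (splice ι S a g y) := by
  have hya : y ≠ ι a := ne_of_mem_erase hy
  have hgS : ∀ x ∈ S, g x ≠ ι a := fun x hx => ne_of_mem_erase (hg.mem x hx)
  refine ⟨fun x hx => ?_, ?_, fun x hx => ?_, fun J hJ => hg.acyclic_splice ha hy hJ⟩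
  · rw [mem_insert, not_or] at hx
    rw [splice_of_notMem hx.2 hx.1, hg.eq_of_notMem x hx.2]
  · rw [coe_insert, Set.injOn_insert ha]
    refine ⟨fun x hx x' hx' hxx' => ?_, ?_⟩
    · rw [splice_of_mem ha hx, splice_of_mem ha hx'] at hxx'
      split_ifs at hxx' with h h' h'
      · exact hg.injOn hx hx' (h.trans h'.symm)
      · exact absurd hxx'.symm (hgS x' hx')
      · exact absurd hxx' (hgS x hx)
      · exact hg.injOn hx hx' hxx'
    · rintro ⟨x, hx, hxy⟩
      rw [splice_self, splice_of_mem ha hx] at hxy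
      split_ifs at hxy with h
      · exact hya hxy.symm
      · exact h hxy
  · rcases mem_insert.1 hx with rfl | hx
    · rw [splice_self]
      exact mem_of_mem_erase hy
    · rw [splice_of_mem ha hx]
      split_ifs
      · exact haT
      · exact mem_of_mem_erase (hg.mem x hx)

lemma splice_bypass {f : A → B} (hf : IsPathForest ι φ (insert a S) T f) (ha : a ∉ S) :
    PathForest.splice ι S a (PathForest.bypass ι φ S a f) (f a) = f := by
  funext x
  by_cases hxa : x = a
  · rw [hxa, splice_self]
  by_cases hx : x ∈ S
  · rw [splice_of_mem ha hx, bypass_of_mem ha hx]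
    by_cases hfx : f x = ι a
    · simp [hfx]
    · have : f x ≠ f a := fun h =>
        hxa (hf.injOn (mem_insert_of_mem hx) (mem_insert_self a S) h)
      simp [hfx, this]
  · rw [splice_of_notMem hx hxa, bypass_of_notMem hx hxa]

lemma bypass_splice {g : A → B} {y : B} (hg : IsPathForest ι φ S (T.erase (ι a)) g)
    (ha : a ∉ S) :
    PathForest.bypass ι φ S a (PathForest.splice ι S a g y) = g := by
  funext x
  by_cases hxa : x = a
  · rw [hxa, bypass_self, hg.eq_of_notMem a ha]
  by_cases hx : x ∈ S
  · rw [bypass_of_mem ha hx, splice_of_mem ha hx, splice_self]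
    by_cases hgx : g x = y
    · simp [hgx]
    · simp [hgx, ne_of_mem_erase (hg.mem x hx)]
  · rw [bypass_of_notMem hx hxa, splice_of_notMem hx hxa]

end IsPathForest

def PathForest.spliceEquiv (ha : a ∉ S) (haT : ι a ∈ T) :
    {f // IsPathForest ι φ (insert a S) T f} ≃
      {g // IsPathForest ι φ S (T.erase (ι a)) g} × T.erase (ι a) where
  toFun f :=
    (⟨bypass ι φ S a f, f.2.bypass ha⟩, ⟨f.1 a, f.2.apply_mem_erase (mem_insert_self a S)⟩)
  invFun p := ⟨splice ι S a p.1 p.2, p.1.2.splice ha haT p.2.2⟩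
  left_inv f := Subtype.ext (f.2.splice_bypass ha)
  right_inv p := Prod.ext (Subtype.ext (p.1.2.bypass_splice ha)) (Subtype.ext splice_self)

theorem card_isPathForest (ι : A ↪ B) (φ : A → B) (S : Finset A) (T : Finset B)
    (hST : ∀ x ∈ S, ι x ∈ T) :
    Nat.card {f // IsPathForest ι φ S T f} = ∏ j ∈ range #S, (#T - 1 - j) := by
  induction S using Finset.induction_on generalizing T with
  | empty =>
    rw [card_empty, prod_range_zero, Nat.card_eq_one_iff_unique]
    refine ⟨⟨fun f g => Subtype.ext ?_⟩, ⟨⟨φ, isPathForest_empty_iff.2 rfl⟩⟩⟩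
    rw [isPathForest_empty_iff.1 f.2, isPathForest_empty_iff.1 g.2]
  | insert a S ha ih =>
    have haT := hST a (mem_insert_self a S)
    have hST' : ∀ x ∈ S, ι x ∈ T.erase (ι a) := fun x hx =>
      mem_erase.2 ⟨ι.injective.ne (ne_of_mem_of_not_mem hx ha), hST x (mem_insert_of_mem hx)⟩
    rw [Nat.card_congr (spliceEquiv ha haT), Nat.card_prod, ih _ hST', Nat.card_eq_finsetCard,
      card_insert_of_notMem ha, prod_range_succ', card_erase_of_mem haT]
    congr 1
    exact prod_congr rfl fun j _ => by omega

end PathForest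

section TwoCore

variable {A B : Type*} [Fintype A] [Fintype B] [DecidableEq A] [DecidableEq B]
  {ι : A ↪ B} {σ : Equiv.Perm A} {I : Finset A}

lemma IsPathForest.apply_mem_image_iff (hσ : I.image σ = I) {f : A → B}
    (hf : IsPathForest ι (ι ∘ σ) Iᶜ (I.image ι)ᶜ f) {x : A} : f x ∈ I.image ι ↔ x ∈ I := by
  by_cases hx : x ∈ I
  · rw [hf.eq_of_notMem x (by simpa using hx), comp_apply, ι.injective.mem_finset_image]
    exact iff_of_true (hσ ▸ mem_image_of_mem σ hx) hx
  · simpa [hx] using hf.mem x (mem_compl.2 hx)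

lemma IsPathForest.injective (hσ : I.image σ = I) {f : A → B}
    (hf : IsPathForest ι (ι ∘ σ) Iᶜ (I.image ι)ᶜ f) : Injective f := by
  intro x y hxy
  have hxy' : x ∈ I ↔ y ∈ I := by
    rw [← hf.apply_mem_image_iff hσ, ← hf.apply_mem_image_iff hσ, hxy]
  by_cases hx : x ∈ I
  · have hy := hxy'.1 hx
    rw [hf.eq_of_notMem x (by simpa using hx), hf.eq_of_notMem y (by simpa using hy)] at hxy
    exact σ.injective (ι.injective hxy)
  · exact hf.injOn (mem_compl.2 hx) (mem_compl.2 (hx ∘ hxy'.2)) hxy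

/-- The left side says that `I` is the 2-core support of `π` and that `π = ι ∘ σ` on `I`. -/
theorem isMaximalInvariant_iff_isPathForest (hσ : I.image σ = I) (π : A ↪ B) :
    ((I.image π = I.image ι ∧ ∀ J : Finset A, J.image π = J.image ι → J ⊆ I) ∧
        ∀ i ∈ I, π i = ι (σ i)) ↔
      IsPathForest ι (ι ∘ σ) Iᶜ (I.image ι)ᶜ π := by
  constructor
  · rintro ⟨⟨hI, hmax⟩, hπσ⟩
    refine ⟨fun x hx => hπσ x (by simpa using hx), π.injective.injOn, fun x hx => ?_,
      fun J hJ hJι => ?_⟩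
    · rw [mem_compl, ← hI, π.injective.mem_finset_image]
      exact mem_compl.1 hx
    · have hJI := hmax J (image_eq_image_iff_forall_mem.2 hJι)
      exact eq_empty_of_forall_notMem fun x hx => mem_compl.1 (hJ hx) (hJI hx)
  · intro hf
    have hπσ : ∀ i ∈ I, π i = ι (σ i) := fun i hi => hf.eq_of_notMem i (by simpa using hi)
    refine ⟨⟨?_, fun J hJ => ?_⟩, hπσ⟩
    · have hισ := congrArg (image ι) hσ
      rw [image_image] at hισ
      exact (image_congr hπσ).trans hισ
    · suffices J \ I = ∅ from sdiff_eq_empty_iff_subset.1 this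
      refine hf.acyclic _ (fun x hx => mem_compl.2 (mem_sdiff.1 hx).2) fun x hx => ?_
      obtain ⟨hxJ, hxI⟩ := mem_sdiff.1 hx
      obtain ⟨j, hj, hjx⟩ := mem_image.1 (image_eq_image_iff_forall_mem.1 hJ x hxJ)
      have hjI : j ∉ I := by
        rw [← hf.apply_mem_image_iff hσ (x := x), ← hjx, ι.injective.mem_finset_image] at hxI
        exact hxI
      exact hjx ▸ mem_image_of_mem ι (mem_sdiff.2 ⟨hj, hjI⟩)

def twoCoreEquiv (hσ : I.image σ = I) :
    {π : A ↪ B // (I.image π = I.image ι ∧ ∀ J : Finset A, J.image π = J.image ι → J ⊆ I) ∧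
        ∀ i ∈ I, π i = ι (σ i)} ≃
      {f : A → B // IsPathForest ι (ι ∘ σ) Iᶜ (I.image ι)ᶜ f} where
  toFun π := ⟨π, (isMaximalInvariant_iff_isPathForest hσ π.1).1 π.2⟩
  invFun f := ⟨⟨f, f.2.injective hσ⟩, (isMaximalInvariant_iff_isPathForest hσ _).2 f.2⟩

end TwoCore

/-- Fix `m ≤ n`, a subset `I ⊆ [m]` and a permutation `σ` of `[m]` supported on `I`.
The number of injections `π : [m] → [n]` whose largest invariant subset (the 2-core
support of the associated bipartite multigraph) is exactly `I` and with `π|_I = σ`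
equals `(n-ℓ-1)(n-ℓ-2)⋯(n-m)` where `ℓ = |I|` (the empty product, when `ℓ = m`,
being `1`). -/
theorem count_injections_with_two_core (m n : ℕ) (hmn : m ≤ n)
    (I : Finset (Fin m)) (σ : Equiv.Perm (Fin m)) (hσ : ∀ i ∉ I, σ i = i) :
    Nat.card {π : Fin m ↪ Fin n //
        (InvariantUnder hmn π I ∧ ∀ J, InvariantUnder hmn π J → J ⊆ I) ∧
          ∀ i ∈ I, π i = Fin.castLE hmn (σ i)}
      = ∏ j ∈ Finset.range (m - I.card), (n - I.card - 1 - j) := by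
  set ι := Fin.castLEEmb hmn
  have hσI : I.image σ = I := by
    simpa [map_eq_image] using
      map_perm (s := I) (σ := σ) fun i hi => by_contra fun h => hi (hσ i h)
  have hST : ∀ i ∈ Iᶜ, ι i ∈ (I.image ι)ᶜ := fun i hi =>
    mem_compl.2 fun h => mem_compl.1 hi (ι.injective.mem_finset_image.1 h)
  -- `InvariantUnder hmn π J` unfolds to `J.image π = J.image ι`
  refine (Nat.card_congr (twoCoreEquiv (ι := ι) hσI)).trans ?_
  rw [card_isPathForest _ _ _ _ hST, card_compl, card_compl,
    card_image_of_injective _ ι.injective, Fintype.card_fin, Fintype.card_fin]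
end
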